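/- Let g(x) = 2x(1−x)/(1−2x+2x^2)^2 on (0,1) and D(x) = (x^4 + (1−x)^4)/6. Then ∫_0^1 D(x) g(x) dx = π/12 − 2/9. -/

import Mathlib

/-!
The integrand is rational with denominator `(1 - 2x + 2x²)² = ((1 + (2x - 1)²) / 2)²`, so
partial fractions give an elementary antiderivative whose only transcendental part is
`arctan (2x - 1)`. The fundamental theorem of calculus then reduces the transcendental part of
the integral to `arctan 1 - arctan (-1) = π / 2`.
-/

open Real

/-- Stationary density of the status-quo reference rule. -/
noncomputable def statDens (x : ℝ) : ℝ := 2 * x * (1 - x) / (1 - 2*x + 2*x^2)^2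

/-- Conditional expected squared increment at state `x`. -/
noncomputable def condQV (x : ℝ) : ℝ := (x^4 + (1 - x)^4) / 6

lemma one_sub_two_mul_add_two_mul_sq_pos (x : ℝ) : 0 < 1 - 2 * x + 2 * x ^ 2 := by
  nlinarith [sq_nonneg (2 * x - 1)]

lemma continuous_condQV_mul_statDens : Continuous fun x => condQV x * statDens x := by
  unfold condQV statDens
  exact Continuous.mul (by fun_prop) <| Continuous.div (by fun_prop) (by fun_prop) fun x =>
    pow_ne_zero 2 (one_sub_two_mul_add_two_mul_sq_pos x).ne'

noncomputable def condQVMulStatDensPrimitive (x : ℝ) : ℝ :=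
  (-(2 * x ^ 3 / 3) + x ^ 2 - 2 * x + 2 * arctan (2 * x - 1)
    - (x - 1 / 2) / (1 - 2 * x + 2 * x ^ 2)) / 12

lemma hasDerivAt_condQVMulStatDensPrimitive (x : ℝ) :
    HasDerivAt condQVMulStatDensPrimitive (condQV x * statDens x) x := by
  have hq := (one_sub_two_mul_add_two_mul_sq_pos x).ne'
  have hlin : HasDerivAt (fun y : ℝ => 2 * y) 2 x := by
    simpa using (hasDerivAt_id x).const_mul 2
  have hsq : HasDerivAt (fun y : ℝ => y ^ 2) (2 * x) x := by
    simpa using hasDerivAt_pow 2 x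
  have hcube : HasDerivAt (fun y : ℝ => 2 * y ^ 3 / 3) (2 * (3 * x ^ 2) / 3) x := by
    simpa [mul_comm, mul_assoc, mul_div_assoc] using ((hasDerivAt_pow 3 x).const_mul 2).div_const 3
  have harctan : HasDerivAt (fun y => arctan (2 * y - 1)) (1 / (1 + (2 * x - 1) ^ 2) * 2) x :=
    (hasDerivAt_arctan _).comp x (hlin.sub_const 1)
  have hquot : HasDerivAt (fun y : ℝ => (y - 1 / 2) / (1 - 2 * y + 2 * y ^ 2))
      ((1 * (1 - 2 * x + 2 * x ^ 2) - (x - 1 / 2) * (0 - 2 + 2 * (2 * x)))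
        / (1 - 2 * x + 2 * x ^ 2) ^ 2) x :=
    ((hasDerivAt_id x).sub_const _).div (((hasDerivAt_const x 1).sub hlin).add (hsq.const_mul 2)) hq
  refine ((((hcube.neg.add hsq).sub hlin).add (harctan.const_mul 2)).sub hquot).div_const 12
    |>.congr_deriv ?_
  -- `arctan'` produces `1 + (2x - 1)²`, which is twice the denominator of the density.
  rw [show 1 + (2 * x - 1) ^ 2 = 2 * (1 - 2 * x + 2 * x ^ 2) by ring]
  unfold condQV statDens
  field_simp
  ring

theorem stmt_4 :
    (∫ x in (0:ℝ)..1, condQV x * statDens x) = π/12 - 2/9 := by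
  rw [intervalIntegral.integral_eq_sub_of_hasDerivAt
    (fun x _ => hasDerivAt_condQVMulStatDensPrimitive x)
    (continuous_condQV_mul_statDens.intervalIntegrable 0 1)]
  unfold condQVMulStatDensPrimitive
  rw [show (2 * 1 - 1 : ℝ) = 1 by norm_num, show (2 * 0 - 1 : ℝ) = -1 by norm_num,
    arctan_neg, arctan_one]
  norm_num
  ring
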